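/- Difference-in-differences representation: under the assumptions of consistency, exchangeability over treatment in each population, positivity, and transportability of conditional mean differences (A4'), the identified average treatment effect satisfies φ = E[ τ₁(X) − τ₀(X) | S=1 ], where τ₁(X) = E[Y | X, S=1, A=1] − E[Y | X, S=1, A=0] and τ₀(X) = E[Y | X, S=0, A=2] − E[Y | X, S=0, A=0]; moreover under A4' these equal the conditional causal contrasts E[Y^{1} − Y^{0} | X, S=1] and E[Y^{2} − Y^{0} | X, S=1] respectively, so φ = E[Y^{1} − Y^{2} | S=1]. -/

import Mathlib

open scoped Classical BigOperators
open Finset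

noncomputable section

/-- Indicator of a proposition. -/
def ind (P : Prop) : ℝ := if P then 1 else 0

/-- Expectation with respect to weights `p` on a finite outcome space. -/
def pexp {Ω : Type*} [Fintype Ω] (p : Ω → ℝ) (f : Ω → ℝ) : ℝ := ∑ ω, p ω * f ω

/-- Probability of an event. -/
def prob {Ω : Type*} [Fintype Ω] (p : Ω → ℝ) (B : Ω → Prop) : ℝ :=
  pexp p (fun ω => ind (B ω))

/-- Conditional expectation of `f` given event `B`. -/
def cexp {Ω : Type*} [Fintype Ω] (p : Ω → ℝ) (f : Ω → ℝ) (B : Ω → Prop) : ℝ :=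
  pexp p (fun ω => f ω * ind (B ω)) / prob p B

/-- Conditional probability of `B` given `C`. -/
def cprob {Ω : Type*} [Fintype Ω] (p : Ω → ℝ) (B C : Ω → Prop) : ℝ :=
  prob p (fun ω => B ω ∧ C ω) / prob p C

/-- Conditional outcome mean `g_{s,a}(x) = E[Y | X = x, S = s, A = a]`. -/
def gfun {Ω 𝒳 : Type*} [Fintype Ω] (p : Ω → ℝ) (X : Ω → 𝒳) (S A : Ω → ℕ)
    (Y : Ω → ℝ) (s a : ℕ) (x : 𝒳) : ℝ :=
  cexp p Y (fun ω => X ω = x ∧ S ω = s ∧ A ω = a)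

/-- Standardized functional `γ_{s,a} = E[ E[Y | X, S=s, A=a] | S=1 ]`. -/
def gam {Ω 𝒳 : Type*} [Fintype Ω] (p : Ω → ℝ) (X : Ω → 𝒳) (S A : Ω → ℕ)
    (Y : Ω → ℝ) (s a : ℕ) : ℝ :=
  cexp p (fun ω => gfun p X S A Y s a (X ω)) (fun ω => S ω = 1)

/-- Participation probability `p_s(x) = Pr[S = s | X = x]`. -/
def psel {Ω 𝒳 : Type*} [Fintype Ω] (p : Ω → ℝ) (X : Ω → 𝒳) (S : Ω → ℕ)
    (s : ℕ) (x : 𝒳) : ℝ :=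
  cprob p (fun ω => S ω = s) (fun ω => X ω = x)

/-- Treatment probability `e_{s,a}(x) = Pr[A = a | X = x, S = s]`. -/
def etrt {Ω 𝒳 : Type*} [Fintype Ω] (p : Ω → ℝ) (X : Ω → 𝒳) (S A : Ω → ℕ)
    (s a : ℕ) (x : 𝒳) : ℝ :=
  cprob p (fun ω => A ω = a) (fun ω => X ω = x ∧ S ω = s)

/-- Weight `w_{s,a}(X,S,A) = I(S=s, A=a) p_1(X) / (e_{s,a}(X) p_s(X))`. -/
def wgt {Ω 𝒳 : Type*} [Fintype Ω] (p : Ω → ℝ) (X : Ω → 𝒳) (S A : Ω → ℕ)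
    (s a : ℕ) (ω : Ω) : ℝ :=
  ind (S ω = s ∧ A ω = a) * psel p X S 1 (X ω) /
    (etrt p X S A s a (X ω) * psel p X S s (X ω))

/-- Influence function `Γ_{s,a}(O)`. -/
def Gam {Ω 𝒳 : Type*} [Fintype Ω] (p : Ω → ℝ) (X : Ω → 𝒳) (S A : Ω → ℕ)
    (Y : Ω → ℝ) (s a : ℕ) (ω : Ω) : ℝ :=
  (1 / prob p (fun ω' => S ω' = 1)) *
    (ind (S ω = 1) * (gfun p X S A Y s a (X ω) - gam p X S A Y s a)
      + wgt p X S A s a ω * (Y ω - gfun p X S A Y s a (X ω)))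

/-- Variance of `f` under `p`. -/
def pvar {Ω : Type*} [Fintype Ω] (p : Ω → ℝ) (f : Ω → ℝ) : ℝ :=
  pexp p (fun ω => (f ω - pexp p f) ^ 2)

/-!
Under consistency and exchangeability, each stratum mean `E[Y | X = x, S = s, A = a]` is the
potential-outcome mean `E[Y^a | X = x, S = s]`. Hence `τ₁(x) = E[Y¹ - Y⁰ | x, S = 1]` and
`τ₀(x) = E[Y² - Y⁰ | x, S = 0]`, which transportability turns into `E[Y² - Y⁰ | x, S = 1]`.
Their difference is `E[Y¹ - Y² | x, S = 1]`, and averaging it over `X` given `S = 1` gives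
`E[Y¹ - Y² | S = 1]` by the tower property.
-/

section FiniteExpectation

variable {Ω : Type*} [Fintype Ω] (p : Ω → ℝ)

lemma ind_nonneg (P : Prop) : 0 ≤ ind P := by
  unfold ind; split <;> norm_num

lemma ind_and (P Q : Prop) : ind (P ∧ Q) = ind P * ind Q := by
  by_cases hP : P <;> by_cases hQ : Q <;> simp [ind, hP, hQ]

lemma prob_nonneg (hp0 : ∀ ω, 0 ≤ p ω) (B : Ω → Prop) : 0 ≤ prob p B :=
  Finset.sum_nonneg fun ω _ => mul_nonneg (hp0 ω) (ind_nonneg _)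

lemma prob_pos_of_mem (hp0 : ∀ ω, 0 ≤ p ω) {B : Ω → Prop} {ω₀ : Ω} (hω₀ : p ω₀ ≠ 0)
    (hB : B ω₀) : 0 < prob p B := by
  refine Finset.sum_pos' (fun ω _ => mul_nonneg (hp0 ω) (ind_nonneg _))
    ⟨ω₀, Finset.mem_univ _, ?_⟩
  simpa [ind, hB] using (hp0 ω₀).lt_of_ne' hω₀

lemma prob_pos_of_cprob_pos (hp0 : ∀ ω, 0 ≤ p ω) {B C : Ω → Prop} (h : 0 < cprob p B C) :
    0 < prob p (fun ω => B ω ∧ C ω) := by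
  rcases div_pos_iff.1 h with ⟨hBC, -⟩ | ⟨hBC, -⟩
  · exact hBC
  · exact absurd hBC (prob_nonneg p hp0 _).not_gt

lemma pexp_const_mul (c : ℝ) (f : Ω → ℝ) : pexp p (fun ω => c * f ω) = c * pexp p f := by
  simp only [pexp, Finset.mul_sum]
  exact Finset.sum_congr rfl fun ω _ => by ring

lemma cexp_sub (f g : Ω → ℝ) (B : Ω → Prop) :
    cexp p (fun ω => f ω - g ω) B = cexp p f B - cexp p g B := by
  simp only [cexp, pexp, ← sub_div, ← Finset.sum_sub_distrib]
  congr 1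
  exact Finset.sum_congr rfl fun ω _ => by ring

lemma cexp_congr {f g : Ω → ℝ} {B : Ω → Prop} (h : ∀ ω, p ω ≠ 0 → B ω → f ω = g ω) :
    cexp p f B = cexp p g B := by
  unfold cexp pexp
  congr 1
  refine Finset.sum_congr rfl fun ω _ => ?_
  by_cases hp : p ω = 0
  · simp [hp]
  by_cases hB : B ω
  · simp only [h ω hp hB]
  · simp [ind, hB]

/-- On a null event `B`, where `cexp p f B` is the junk value `0`, both sides vanish. -/
lemma cexp_mul_prob (hp0 : ∀ ω, 0 ≤ p ω) (f : Ω → ℝ) (B : Ω → Prop) :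
    cexp p f B * prob p B = pexp p (fun ω => f ω * ind (B ω)) := by
  rcases (prob_nonneg p hp0 B).lt_or_eq with hB | hB
  · exact div_mul_cancel₀ _ hB.ne'
  have hnull : ∀ ω, p ω * ind (B ω) = 0 := fun ω =>
    (Finset.sum_eq_zero_iff_of_nonneg fun ω _ => mul_nonneg (hp0 ω) (ind_nonneg _)).1
      hB.symm ω (Finset.mem_univ ω)
  rw [← hB, mul_zero]
  exact (Finset.sum_eq_zero fun ω _ => by rw [mul_left_comm, hnull, mul_zero]).symm

lemma pexp_eq_sum_fiberwise {𝒳 : Type*} (X : Ω → 𝒳) (f : Ω → ℝ) :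
    pexp p f = ∑ x ∈ Finset.univ.image X, pexp p (fun ω => f ω * ind (X ω = x)) := by
  rw [pexp, ← Finset.sum_fiberwise_of_maps_to (g := X) (t := Finset.univ.image X)
    fun ω _ => Finset.mem_image_of_mem X (Finset.mem_univ ω)]
  refine Finset.sum_congr rfl fun x _ => ?_
  rw [pexp, Finset.sum_filter]
  exact Finset.sum_congr rfl fun ω _ => by by_cases h : X ω = x <;> simp [ind, h]

lemma cexp_tower (hp0 : ∀ ω, 0 ≤ p ω) {𝒳 : Type*} (X : Ω → 𝒳) (B : Ω → Prop)
    (f : Ω → ℝ) :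
    cexp p (fun ω => cexp p f (fun ω' => X ω' = X ω ∧ B ω')) B = cexp p f B := by
  have hfiber : ∀ x, pexp p (fun ω =>
      cexp p f (fun ω' => X ω' = X ω ∧ B ω') * ind (B ω) * ind (X ω = x)) =
      pexp p (fun ω => f ω * ind (B ω) * ind (X ω = x)) := fun x => calc
    _ = pexp p (fun ω => cexp p f (fun ω' => X ω' = x ∧ B ω') * ind (X ω = x ∧ B ω)) := by
        congr 1; funext ω
        by_cases h : X ω = x <;> simp [ind, h]
    _ = cexp p f (fun ω' => X ω' = x ∧ B ω') * prob p (fun ω' => X ω' = x ∧ B ω') :=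
        pexp_const_mul p _ _
    _ = _ := by
        rw [cexp_mul_prob p hp0]
        congr 1; funext ω
        rw [ind_and, mul_comm (ind _), mul_assoc]
  refine congrArg (· / prob p B) ?_
  rw [pexp_eq_sum_fiberwise p X, pexp_eq_sum_fiberwise p X (fun ω => f ω * ind (B ω))]
  exact Finset.sum_congr rfl fun x _ => hfiber x

end FiniteExpectation

lemma gfun_eq_cexp_potential {Ω 𝒳 : Type*} [Fintype Ω] (p : Ω → ℝ) (X : Ω → 𝒳)
    (S A : Ω → ℕ) (Y : Ω → ℝ) (Ypo : ℕ → Ω → ℝ) (hcons : ∀ ω a, A ω = a → Ypo a ω = Y ω)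
    {s a : ℕ} {x : 𝒳}
    (hexch : cexp p (Ypo a) (fun ω => X ω = x ∧ S ω = s) =
      cexp p (Ypo a) (fun ω => X ω = x ∧ S ω = s ∧ A ω = a)) :
    gfun p X S A Y s a x = cexp p (Ypo a) (fun ω => X ω = x ∧ S ω = s) :=
  hexch ▸ cexp_congr p fun ω _ hω => (hcons ω a hω.2.2).symm

theorem statement19_general
    {Ω 𝒳 : Type*} [Fintype Ω] (p : Ω → ℝ)
    (hp0 : ∀ ω, 0 ≤ p ω)
    (X : Ω → 𝒳) (S A : Ω → ℕ) (Y : Ω → ℝ) (Ypo : ℕ → Ω → ℝ)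
    (hcons : ∀ ω a, A ω = a → Ypo a ω = Y ω)
    (hexch1 : ∀ x, ∀ a ∈ ({0, 1} : Set ℕ),
      0 < prob p (fun ω => X ω = x ∧ S ω = 1) →
      cexp p (Ypo a) (fun ω => X ω = x ∧ S ω = 1) =
        cexp p (Ypo a) (fun ω => X ω = x ∧ S ω = 1 ∧ A ω = a))
    (hexch0 : ∀ x, ∀ a ∈ ({0, 2} : Set ℕ),
      0 < prob p (fun ω => X ω = x ∧ S ω = 0) →
      cexp p (Ypo a) (fun ω => X ω = x ∧ S ω = 0) =
        cexp p (Ypo a) (fun ω => X ω = x ∧ S ω = 0 ∧ A ω = a))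
    (hA5 : ∀ x, 0 < prob p (fun ω => X ω = x ∧ S ω = 1) →
      0 < cprob p (fun ω => S ω = 0) (fun ω => X ω = x))
    (hA4' : ∀ x, 0 < prob p (fun ω => X ω = x ∧ S ω = 1) →
      cexp p (fun ω => Ypo 2 ω - Ypo 0 ω) (fun ω => X ω = x ∧ S ω = 1) =
        cexp p (fun ω => Ypo 2 ω - Ypo 0 ω) (fun ω => X ω = x ∧ S ω = 0)) :
    (gam p X S A Y 1 1 - gam p X S A Y 1 0) -
        (gam p X S A Y 0 2 - gam p X S A Y 0 0) =
      cexp p (fun ω =>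
        (gfun p X S A Y 1 1 (X ω) - gfun p X S A Y 1 0 (X ω)) -
          (gfun p X S A Y 0 2 (X ω) - gfun p X S A Y 0 0 (X ω)))
        (fun ω => S ω = 1) ∧
    (∀ x, 0 < prob p (fun ω => X ω = x ∧ S ω = 1) →
      gfun p X S A Y 1 1 x - gfun p X S A Y 1 0 x =
        cexp p (fun ω => Ypo 1 ω - Ypo 0 ω) (fun ω => X ω = x ∧ S ω = 1) ∧
      gfun p X S A Y 0 2 x - gfun p X S A Y 0 0 x =
        cexp p (fun ω => Ypo 2 ω - Ypo 0 ω) (fun ω => X ω = x ∧ S ω = 1)) ∧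
    (gam p X S A Y 1 1 - gam p X S A Y 1 0) -
        (gam p X S A Y 0 2 - gam p X S A Y 0 0) =
      cexp p (fun ω => Ypo 1 ω - Ypo 2 ω) (fun ω => S ω = 1) := by
  have hdid : (gam p X S A Y 1 1 - gam p X S A Y 1 0) -
      (gam p X S A Y 0 2 - gam p X S A Y 0 0) =
      cexp p (fun ω =>
        (gfun p X S A Y 1 1 (X ω) - gfun p X S A Y 1 0 (X ω)) -
          (gfun p X S A Y 0 2 (X ω) - gfun p X S A Y 0 0 (X ω)))
        (fun ω => S ω = 1) := by
    simp only [gam, cexp_sub]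
  have hcate : ∀ x, 0 < prob p (fun ω => X ω = x ∧ S ω = 1) →
      gfun p X S A Y 1 1 x - gfun p X S A Y 1 0 x =
        cexp p (fun ω => Ypo 1 ω - Ypo 0 ω) (fun ω => X ω = x ∧ S ω = 1) ∧
      gfun p X S A Y 0 2 x - gfun p X S A Y 0 0 x =
        cexp p (fun ω => Ypo 2 ω - Ypo 0 ω) (fun ω => X ω = x ∧ S ω = 1) := by
    intro x hx
    have hx0 : 0 < prob p (fun ω => X ω = x ∧ S ω = 0) := by
      simpa only [and_comm] using prob_pos_of_cprob_pos p hp0 (hA5 x hx)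
    rw [gfun_eq_cexp_potential p X S A Y Ypo hcons (hexch1 x 1 (by simp) hx),
      gfun_eq_cexp_potential p X S A Y Ypo hcons (hexch1 x 0 (by simp) hx),
      gfun_eq_cexp_potential p X S A Y Ypo hcons (hexch0 x 2 (by simp) hx0),
      gfun_eq_cexp_potential p X S A Y Ypo hcons (hexch0 x 0 (by simp) hx0),
      hA4' x hx, cexp_sub, cexp_sub]
    exact ⟨rfl, rfl⟩
  refine ⟨hdid, hcate, ?_⟩
  rw [hdid, ← cexp_tower p hp0 X _ (fun ω => Ypo 1 ω - Ypo 2 ω)]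
  refine cexp_congr p fun ω hpω hω => ?_
  obtain ⟨h1, h0⟩ := hcate (X ω) (prob_pos_of_mem p hp0 hpω ⟨rfl, hω⟩)
  rw [h1, h0, ← cexp_sub]
  exact cexp_congr p fun _ _ _ => by ring

theorem statement19
    {Ω 𝒳 : Type*} [Fintype Ω] (p : Ω → ℝ)
    (hp0 : ∀ ω, 0 ≤ p ω) (hp1 : ∑ ω, p ω = 1)
    (X : Ω → 𝒳) (S A : Ω → ℕ) (Y : Ω → ℝ) (Ypo : ℕ → Ω → ℝ)
    (hS : 0 < prob p (fun ω => S ω = 1))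
    (hcons : ∀ ω a, A ω = a → Ypo a ω = Y ω)
    (hexch1 : ∀ x, ∀ a ∈ ({0, 1} : Set ℕ),
      0 < prob p (fun ω => X ω = x ∧ S ω = 1) →
      cexp p (Ypo a) (fun ω => X ω = x ∧ S ω = 1) =
        cexp p (Ypo a) (fun ω => X ω = x ∧ S ω = 1 ∧ A ω = a))
    (hpos1 : ∀ x, ∀ a ∈ ({0, 1} : Set ℕ),
      0 < prob p (fun ω => X ω = x ∧ S ω = 1) →
      0 < cprob p (fun ω => A ω = a) (fun ω => X ω = x ∧ S ω = 1))
    (hexch0 : ∀ x, ∀ a ∈ ({0, 2} : Set ℕ),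
      0 < prob p (fun ω => X ω = x ∧ S ω = 0) →
      cexp p (Ypo a) (fun ω => X ω = x ∧ S ω = 0) =
        cexp p (Ypo a) (fun ω => X ω = x ∧ S ω = 0 ∧ A ω = a))
    (hpos0 : ∀ x, ∀ a ∈ ({0, 2} : Set ℕ),
      0 < prob p (fun ω => X ω = x ∧ S ω = 0) →
      0 < cprob p (fun ω => A ω = a) (fun ω => X ω = x ∧ S ω = 0))
    (hA5 : ∀ x, 0 < prob p (fun ω => X ω = x ∧ S ω = 1) →
      0 < cprob p (fun ω => S ω = 0) (fun ω => X ω = x))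
    (hA4' : ∀ x, 0 < prob p (fun ω => X ω = x ∧ S ω = 1) →
      cexp p (fun ω => Ypo 2 ω - Ypo 0 ω) (fun ω => X ω = x ∧ S ω = 1) =
        cexp p (fun ω => Ypo 2 ω - Ypo 0 ω) (fun ω => X ω = x ∧ S ω = 0)) :
    (gam p X S A Y 1 1 - gam p X S A Y 1 0) -
        (gam p X S A Y 0 2 - gam p X S A Y 0 0) =
      cexp p (fun ω =>
        (gfun p X S A Y 1 1 (X ω) - gfun p X S A Y 1 0 (X ω)) -
          (gfun p X S A Y 0 2 (X ω) - gfun p X S A Y 0 0 (X ω)))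
        (fun ω => S ω = 1) ∧
    (∀ x, 0 < prob p (fun ω => X ω = x ∧ S ω = 1) →
      gfun p X S A Y 1 1 x - gfun p X S A Y 1 0 x =
        cexp p (fun ω => Ypo 1 ω - Ypo 0 ω) (fun ω => X ω = x ∧ S ω = 1) ∧
      gfun p X S A Y 0 2 x - gfun p X S A Y 0 0 x =
        cexp p (fun ω => Ypo 2 ω - Ypo 0 ω) (fun ω => X ω = x ∧ S ω = 1)) ∧
    (gam p X S A Y 1 1 - gam p X S A Y 1 0) -
        (gam p X S A Y 0 2 - gam p X S A Y 0 0) =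
      cexp p (fun ω => Ypo 1 ω - Ypo 2 ω) (fun ω => S ω = 1) :=
  statement19_general p hp0 X S A Y Ypo hcons hexch1 hexch0 hA5 hA4'
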